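/- Let X_1, ..., X_m ∈ M_n(ℂ) and suppose for each j there is a unit-modulus z_j with W(z_j X_j) ⊂ S_{α_j}, α_j ∈ [0, π/2). Then ω(X_1 X_2 ⋯ X_m) ≤ ∏_{j=1}^m sec(α_j) ω(X_j). -/

import Mathlib

open Matrix Complex
open scoped ComplexOrder

/-- Hermitian real part `(X + Xᴴ)/2`. -/
noncomputable def reM {m : ℕ} (X : Matrix (Fin m) (Fin m) ℂ) : Matrix (Fin m) (Fin m) ℂ :=
  (1 / 2 : ℂ) • (X + Xᴴ)

/-- Hermitian imaginary part `(X - Xᴴ)/(2i)`. -/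
noncomputable def imM {m : ℕ} (X : Matrix (Fin m) (Fin m) ℂ) : Matrix (Fin m) (Fin m) ℂ :=
  (-Complex.I / 2) • (X - Xᴴ)

/-- Numerical range `W(X) = {⟨Xx, x⟩ : ‖x‖ = 1}`. -/
noncomputable def numRange {m : ℕ} (X : Matrix (Fin m) (Fin m) ℂ) : Set ℂ :=
  {z | ∃ x : EuclideanSpace ℂ (Fin m), ‖x‖ = 1 ∧ z = star (x : Fin m → ℂ) ⬝ᵥ X.mulVec x}

/-- Numerical radius `ω(X) = sup {|z| : z ∈ W(X)}`. -/
noncomputable def numRadius {m : ℕ} (X : Matrix (Fin m) (Fin m) ℂ) : ℝ :=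
  sSup ((fun w : ℂ => ‖w‖) '' numRange X)

/-- The sector `S_α`. -/
def sector (α : ℝ) : Set ℂ := {z : ℂ | 0 < z.re ∧ |z.im| ≤ Real.tan α * z.re}

/-- Operator norm of a matrix acting on Euclidean space. -/
noncomputable def opNorm {m : ℕ} (X : Matrix (Fin m) (Fin m) ℂ) : ℝ :=
  ‖Matrix.toEuclideanCLM (𝕜 := ℂ) X‖

/-!
Write `A = H + iK` with `H = ℜ A` and `K = ℑ A`. The sector condition `W(A) ⊆ S_α` says exactly
that `0 ≤ H` and `-tH ≤ K ≤ tH` in the Loewner order, where `t = tan α`. After perturbing `H` to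
the invertible `B = H + ε`, conjugation by `B^{-1/2}` turns `K` into a self-adjoint `C` with
`‖C‖ ≤ t`, and `B + iK = B^{1/2} (1 + iC) B^{1/2}` with `‖1 + iC‖² = ‖1 + C²‖ ≤ 1 + t²`. Letting
`ε → 0` gives `‖A‖ ≤ sec α ‖H‖ ≤ sec α ω(A)`. The theorem follows since `ω(X) ≤ ‖X‖`, the operator
norm is submultiplicative, and unimodular scalars change neither `‖X‖` nor `ω(X)`.
-/

open Filter Topology
open scoped InnerProductSpace ComplexStarModule Matrix.Norms.L2Operator

section CStarAlgebra

variable {A : Type*} [CStarAlgebra A]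

lemma norm_one_add_I_smul_le {c : A} (hc : IsSelfAdjoint c) :
    ‖1 + I • c‖ ≤ √(1 + ‖c‖ ^ 2) := by
  nontriviality A
  have hstar : star (1 + I • c) * (1 + I • c) = 1 + c * c := by
    simp only [star_add, star_one, star_smul, hc.star_eq, Complex.star_def, Complex.conj_I]
    simp only [mul_add, add_mul, one_mul, mul_one, smul_mul_assoc, mul_smul_comm]
    match_scalars <;> simp
  rw [Real.le_sqrt (norm_nonneg _) (by positivity), sq, ← CStarRing.norm_star_mul_self, hstar]
  calc ‖1 + c * c‖ ≤ ‖(1 : A)‖ + ‖c * c‖ := norm_add_le _ _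
    _ = 1 + ‖c‖ ^ 2 := by rw [norm_one, hc.norm_mul_self, sq]

variable [PartialOrder A] [StarOrderedRing A]

lemma IsSelfAdjoint.norm_le_of_neg_le_of_le {c : A} (hc : IsSelfAdjoint c) {t : ℝ} (ht : 0 ≤ t)
    (h₁ : -algebraMap ℝ A t ≤ c) (h₂ : c ≤ algebraMap ℝ A t) : ‖c‖ ≤ t := by
  rw [← cfc_id' ℝ c]
  refine norm_cfc_le ht fun x hx => abs_le.2 ⟨?_, (le_algebraMap_iff_spectrum_le hc).1 h₂ x hx⟩
  rw [← map_neg] at h₁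
  exact (algebraMap_le_iff_le_spectrum hc).1 h₁ x hx

lemma IsStrictlyPositive.norm_add_I_smul_le {b k : A} (hb : IsStrictlyPositive b)
    (hk : IsSelfAdjoint k) {t : ℝ} (ht : 0 ≤ t) (h₁ : -(t • b) ≤ k) (h₂ : k ≤ t • b) :
    ‖b + I • k‖ ≤ √(1 + t ^ 2) * ‖b‖ := by
  set s := CFC.sqrt b
  set r := Ring.inverse s
  have hs : IsUnit s := hb.isUnit_cfcSqrt
  have hsr : s * r = 1 := Ring.mul_inverse_cancel s hs
  have hrs : r * s = 1 := Ring.inverse_mul_cancel s hs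
  have hr : IsSelfAdjoint r := by
    simpa only [r, s, ← CFC.sqrt_ringInverse] using .of_nonneg (CFC.sqrt_nonneg _)
  have hss : s * s = b := CFC.sqrt_mul_sqrt_self b hb.nonneg
  have hrbr : r * b * r = 1 := by
    rw [← hss, ← mul_assoc, hrs, one_mul, hsr]
  set c := r * k * r
  have hc : IsSelfAdjoint c := hk.conjugate_self hr
  have hc_norm : ‖c‖ ≤ t := by
    refine hc.norm_le_of_neg_le_of_le ht ?_ ?_
    · simpa [hrbr, Algebra.algebraMap_eq_smul_one] using hr.conjugate_le_conjugate h₁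
    · simpa [hrbr, Algebra.algebraMap_eq_smul_one] using hr.conjugate_le_conjugate h₂
  have hfactor : b + I • k = s * (1 + I • c) * s := by
    rw [mul_add, add_mul, mul_one, hss, mul_smul_comm, smul_mul_assoc]
    simp only [c, ← mul_assoc, hsr, one_mul]
    rw [mul_assoc, hrs, mul_one]
  have hs_norm : ‖s‖ * ‖s‖ = ‖b‖ := by
    rw [CFC.norm_sqrt b hb.nonneg, Real.mul_self_sqrt (norm_nonneg _)]
  calc ‖b + I • k‖ ≤ ‖s‖ * ‖1 + I • c‖ * ‖s‖ := by
        rw [hfactor]; exact (norm_mul_le _ _).trans (by gcongr; exact norm_mul_le _ _)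
    _ = ‖1 + I • c‖ * ‖b‖ := by rw [← hs_norm]; ring
    _ ≤ √(1 + t ^ 2) * ‖b‖ := by
        gcongr
        exact (norm_one_add_I_smul_le hc).trans (by gcongr)

lemma norm_add_I_smul_le_of_nonneg {h k : A} (hh : 0 ≤ h) (hk : IsSelfAdjoint k) {t : ℝ}
    (ht : 0 ≤ t) (h₁ : -(t • h) ≤ k) (h₂ : k ≤ t • h) : ‖h + I • k‖ ≤ √(1 + t ^ 2) * ‖h‖ := by
  have hperturb : ∀ ε > 0,
      ‖h + algebraMap ℝ A ε + I • k‖ ≤ √(1 + t ^ 2) * ‖h + algebraMap ℝ A ε‖ := by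
    intro ε hε
    have hle : t • h ≤ t • (h + algebraMap ℝ A ε) :=
      smul_le_smul_of_nonneg_left (le_add_of_nonneg_right (algebraMap_nonneg A hε.le)) ht
    exact IsStrictlyPositive.norm_add_I_smul_le
      (.nonneg_add hh (isStrictlyPositive_algebraMap hε)) hk ht
      ((neg_le_neg hle).trans h₁) (h₂.trans hle)
  have hcont : ∀ f : ℝ → ℝ, Continuous f → Tendsto f (𝓝[>] 0) (𝓝 (f 0)) :=
    fun f hf => hf.continuousAt.tendsto.mono_left nhdsWithin_le_nhds
  simpa using le_of_tendsto_of_tendsto (hcont _ (by fun_prop)) (hcont _ (by fun_prop))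
    (eventually_nhdsWithin_of_forall hperturb)

end CStarAlgebra

namespace ContinuousLinearMap

variable {E : Type*} [NormedAddCommGroup E] [InnerProductSpace ℂ E] [CompleteSpace E]

lemma le_of_forall_re_inner_le {S U : E →L[ℂ] E} (hS : IsSelfAdjoint S) (hU : IsSelfAdjoint U)
    (h : ∀ x, (⟪x, S x⟫_ℂ).re ≤ (⟪x, U x⟫_ℂ).re) : S ≤ U := by
  rw [le_def, isPositive_def']
  refine ⟨hU.sub hS, fun x => ?_⟩
  rw [reApplyInnerSelf_apply, _root_.sub_apply, inner_sub_left, map_sub, sub_nonneg, inner_re_symm,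
    inner_re_symm (U x)]
  exact h x

lemma inner_realPart_apply (T : E →L[ℂ] E) (x : E) :
    ⟪x, (ℜ T : E →L[ℂ] E) x⟫_ℂ = (⟪x, T x⟫_ℂ).re := by
  rw [realPart_apply_coe, star_eq_adjoint, _root_.smul_apply, _root_.add_apply,
    inner_smul_right_eq_smul, inner_add_right, adjoint_inner_right, ← inner_conj_symm (T x),
    Complex.add_conj, real_smul]
  push_cast
  ring

lemma inner_imaginaryPart_apply (T : E →L[ℂ] E) (x : E) :
    ⟪x, (ℑ T : E →L[ℂ] E) x⟫_ℂ = (⟪x, T x⟫_ℂ).im := by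
  rw [imaginaryPart_apply_coe, star_eq_adjoint, _root_.smul_apply, _root_.smul_apply,
    _root_.sub_apply, inner_smul_right_eq_smul, inner_smul_right_eq_smul, inner_sub_right,
    adjoint_inner_right, ← inner_conj_symm (T x), Complex.sub_conj, real_smul, smul_eq_mul]
  push_cast
  linear_combination -((⟪x, T x⟫_ℂ).im : ℂ) * I_sq

lemma realPart_nonneg_of_forall_re_inner_nonneg {T : E →L[ℂ] E}
    (hre : ∀ x, 0 ≤ (⟪x, T x⟫_ℂ).re) : 0 ≤ (ℜ T : E →L[ℂ] E) :=
  le_of_forall_re_inner_le (.zero _) (ℜ T).2 (by simpa [inner_realPart_apply] using hre)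

lemma norm_le_of_nonneg_of_forall_re_inner_le {S : E →L[ℂ] E} (hS : 0 ≤ S) {c : ℝ} (hc : 0 ≤ c)
    (h : ∀ x, (⟪x, S x⟫_ℂ).re ≤ c * ‖x‖ ^ 2) : ‖S‖ ≤ c := by
  rw [CStarAlgebra.norm_le_iff_le_algebraMap S hc hS]
  refine le_of_forall_re_inner_le (.of_nonneg hS) (.algebraMap _ (.all c)) fun x => ?_
  simpa [Algebra.algebraMap_eq_smul_one, inner_smul_right_eq_smul, inner_self_eq_norm_sq_to_K,
    ← ofReal_pow] using h x

theorem norm_le_sqrt_one_add_sq_mul_norm_realPart (T : E →L[ℂ] E) {t : ℝ} (ht : 0 ≤ t)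
    (hre : ∀ x, 0 ≤ (⟪x, T x⟫_ℂ).re) (him : ∀ x, |(⟪x, T x⟫_ℂ).im| ≤ t * (⟪x, T x⟫_ℂ).re) :
    ‖T‖ ≤ √(1 + t ^ 2) * ‖(ℜ T : E →L[ℂ] E)‖ := by
  have hH : IsSelfAdjoint (ℜ T : E →L[ℂ] E) := (ℜ T).2
  have hK : IsSelfAdjoint (ℑ T : E →L[ℂ] E) := (ℑ T).2
  conv_lhs => rw [← realPart_add_I_smul_imaginaryPart T]
  refine norm_add_I_smul_le_of_nonneg (realPart_nonneg_of_forall_re_inner_nonneg hre) hK ht ?_ ?_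
  · refine le_of_forall_re_inner_le ((IsSelfAdjoint.all t).smul hH).neg hK fun x => ?_
    simpa [inner_smul_right_eq_smul, inner_realPart_apply, inner_imaginaryPart_apply]
      using (abs_le.1 (him x)).1
  · refine le_of_forall_re_inner_le hK ((IsSelfAdjoint.all t).smul hH) fun x => ?_
    simpa [inner_smul_right_eq_smul, inner_realPart_apply, inner_imaginaryPart_apply]
      using (abs_le.1 (him x)).2

end ContinuousLinearMap

section NumericalRange

variable {n : ℕ}

lemma star_dotProduct_mulVec_eq_inner (A : Matrix (Fin n) (Fin n) ℂ)
    (x : EuclideanSpace ℂ (Fin n)) :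
    star (x : Fin n → ℂ) ⬝ᵥ A *ᵥ x = ⟪x, toEuclideanCLM (𝕜 := ℂ) A x⟫_ℂ := by
  rw [EuclideanSpace.inner_eq_star_dotProduct, ofLp_toEuclideanCLM, dotProduct_comm]

lemma mem_numRange_iff {A : Matrix (Fin n) (Fin n) ℂ} {w : ℂ} :
    w ∈ numRange A ↔
      ∃ x : EuclideanSpace ℂ (Fin n), ‖x‖ = 1 ∧ w = ⟪x, toEuclideanCLM (𝕜 := ℂ) A x⟫_ℂ := by
  simp only [numRange, Set.mem_ofPred_eq, star_dotProduct_mulVec_eq_inner]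

lemma exists_mem_numRange_inner_eq {A : Matrix (Fin n) (Fin n) ℂ} {x : EuclideanSpace ℂ (Fin n)}
    (hx : x ≠ 0) : ∃ w ∈ numRange A, ⟪x, toEuclideanCLM (𝕜 := ℂ) A x⟫_ℂ = (‖x‖ ^ 2 : ℝ) * w := by
  have hx' : ‖x‖ ≠ 0 := norm_ne_zero_iff.2 hx
  refine ⟨_, mem_numRange_iff.2 ⟨‖x‖⁻¹ • x, ?_, rfl⟩, ?_⟩
  · rw [norm_smul, norm_inv, norm_norm, inv_mul_cancel₀ hx']
  · rw [ContinuousLinearMap.map_smul_of_tower, inner_smul_left_eq_smul, inner_smul_right_eq_smul,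
      smul_smul, real_smul, ← mul_assoc, ← ofReal_mul,
      show ‖x‖ ^ 2 * (‖x‖⁻¹ * ‖x‖⁻¹) = 1 by field_simp, ofReal_one, one_mul]

lemma norm_le_norm_of_mem_numRange {A : Matrix (Fin n) (Fin n) ℂ} {w : ℂ}
    (hw : w ∈ numRange A) : ‖w‖ ≤ ‖A‖ := by
  obtain ⟨x, hx, rfl⟩ := mem_numRange_iff.1 hw
  calc _ ≤ ‖x‖ * ‖toEuclideanCLM (𝕜 := ℂ) A x‖ := norm_inner_le_norm _ _
    _ ≤ ‖x‖ * (‖A‖ * ‖x‖) := by gcongr; exact (toEuclideanCLM (𝕜 := ℂ) A).le_opNorm x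
    _ = ‖A‖ := by rw [hx]; ring

lemma norm_le_numRadius {A : Matrix (Fin n) (Fin n) ℂ} {w : ℂ} (hw : w ∈ numRange A) :
    ‖w‖ ≤ numRadius A :=
  le_csSup ⟨‖A‖, Set.forall_mem_image.2 fun _ => norm_le_norm_of_mem_numRange⟩ ⟨w, hw, rfl⟩

lemma numRadius_nonneg (A : Matrix (Fin n) (Fin n) ℂ) : 0 ≤ numRadius A :=
  Real.sSup_nonneg <| Set.forall_mem_image.2 fun w _ => norm_nonneg w

lemma numRadius_le_norm (A : Matrix (Fin n) (Fin n) ℂ) : numRadius A ≤ ‖A‖ :=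
  Real.sSup_le (Set.forall_mem_image.2 fun _ => norm_le_norm_of_mem_numRange) (norm_nonneg A)

lemma numRange_smul (A : Matrix (Fin n) (Fin n) ℂ) (z : ℂ) :
    numRange (z • A) = (z * ·) '' numRange A := by
  ext w
  simp [numRange, smul_mulVec, dotProduct_smul, eq_comm]

lemma numRadius_smul_of_norm_eq_one (A : Matrix (Fin n) (Fin n) ℂ) {z : ℂ} (hz : ‖z‖ = 1) :
    numRadius (z • A) = numRadius A := by
  simp only [numRadius, numRange_smul, Set.image_image, norm_mul, hz, one_mul]

lemma re_inner_le_numRadius_mul (A : Matrix (Fin n) (Fin n) ℂ) (x : EuclideanSpace ℂ (Fin n)) :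
    (⟪x, toEuclideanCLM (𝕜 := ℂ) A x⟫_ℂ).re ≤ numRadius A * ‖x‖ ^ 2 := by
  rcases eq_or_ne x 0 with rfl | hx
  · simp
  obtain ⟨w, hw, hq⟩ := exists_mem_numRange_inner_eq (A := A) hx
  rw [hq, re_ofReal_mul, mul_comm]
  gcongr
  exact (re_le_norm w).trans (norm_le_numRadius hw)

lemma re_nonneg_and_abs_im_le_of_numRange_subset_sector {A : Matrix (Fin n) (Fin n) ℂ} {α : ℝ}
    (hA : numRange A ⊆ sector α) (x : EuclideanSpace ℂ (Fin n)) :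
    0 ≤ (⟪x, toEuclideanCLM (𝕜 := ℂ) A x⟫_ℂ).re ∧
      |(⟪x, toEuclideanCLM (𝕜 := ℂ) A x⟫_ℂ).im| ≤
        Real.tan α * (⟪x, toEuclideanCLM (𝕜 := ℂ) A x⟫_ℂ).re := by
  rcases eq_or_ne x 0 with rfl | hx
  · simp
  obtain ⟨w, hw, hq⟩ := exists_mem_numRange_inner_eq (A := A) hx
  obtain ⟨hre, him⟩ := hA hw
  rw [hq, re_ofReal_mul, im_ofReal_mul, abs_mul, abs_of_nonneg (by positivity), mul_left_comm]
  exact ⟨by positivity, mul_le_mul_of_nonneg_left him (by positivity)⟩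

theorem norm_le_inv_cos_mul_numRadius {A : Matrix (Fin n) (Fin n) ℂ} {α : ℝ}
    (hα : α ∈ Set.Ico 0 (Real.pi / 2)) (hA : numRange A ⊆ sector α) :
    ‖A‖ ≤ (Real.cos α)⁻¹ * numRadius A := by
  have hcos : 0 < Real.cos α := Real.cos_pos_of_mem_Ioo ⟨by linarith [Real.pi_pos, hα.1], hα.2⟩
  have htan : 0 ≤ Real.tan α := Real.tan_nonneg_of_nonneg_of_le_pi_div_two hα.1 hα.2.le
  have hsec := re_nonneg_and_abs_im_le_of_numRange_subset_sector hA
  set T := toEuclideanCLM (𝕜 := ℂ) A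
  calc ‖A‖ = ‖T‖ := cstar_norm_def A
    _ ≤ √(1 + Real.tan α ^ 2) * ‖(ℜ T : _)‖ :=
        T.norm_le_sqrt_one_add_sq_mul_norm_realPart htan (fun x => (hsec x).1) (fun x => (hsec x).2)
    _ ≤ (Real.cos α)⁻¹ * numRadius A := by
        rw [← Real.inv_sqrt_one_add_tan_sq hcos, inv_inv]
        gcongr
        refine ContinuousLinearMap.norm_le_of_nonneg_of_forall_re_inner_le
          (T.realPart_nonneg_of_forall_re_inner_nonneg fun x => (hsec x).1) (numRadius_nonneg A) ?_
        simpa [ContinuousLinearMap.inner_realPart_apply] using re_inner_le_numRadius_mul A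

end NumericalRange

theorem numRadius_list_prod_le_sec {n m : ℕ} (hm : 0 < m)
    (X : Fin m → Matrix (Fin n) (Fin n) ℂ) (α : Fin m → ℝ) (z : Fin m → ℂ)
    (hα : ∀ j, α j ∈ Set.Ico 0 (Real.pi / 2)) (hz : ∀ j, ‖z j‖ = 1)
    (hX : ∀ j, numRange (z j • X j) ⊆ sector (α j)) :
    numRadius (List.ofFn X).prod ≤ ∏ j : Fin m, (Real.cos (α j))⁻¹ * numRadius (X j) := by
  have hX_norm : ∀ j, ‖X j‖ ≤ (Real.cos (α j))⁻¹ * numRadius (X j) := fun j => by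
    simpa [norm_smul, hz j, numRadius_smul_of_norm_eq_one _ (hz j)]
      using norm_le_inv_cos_mul_numRadius (hα j) (hX j)
  calc numRadius (List.ofFn X).prod ≤ ‖(List.ofFn X).prod‖ := numRadius_le_norm _
    _ ≤ ((List.ofFn X).map norm).prod := List.norm_prod_le' (by simpa using hm.ne')
    _ = ∏ j, ‖X j‖ := by rw [List.map_ofFn, List.prod_ofFn]; rfl
    _ ≤ ∏ j, (Real.cos (α j))⁻¹ * numRadius (X j) :=
        Finset.prod_le_prod (fun _ _ => norm_nonneg _) fun j _ => hX_norm j
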